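/- Let β > 0, κ ≥ 0, τ > 0, L > 0 and let N ≥ 1 be an integer. Let M_Ω ∈ ℝ^{n_Ω×n_Ω} and M_Γ ∈ ℝ^{n_Γ×n_Γ} be diagonal matrices with positive diagonal entries, and let L_Ω ∈ ℝ^{n_Ω×n_Ω} and L_Γ ∈ ℝ^{n_Γ×n_Γ} be symmetric positive semidefinite. Let F₁, F₂, G₁, G₂ : ℝ → ℝ be differentiable with F₁, G₁ convex and F₂, G₂ concave, and set F = F₁ + F₂ and G = G₁ + G₂, with F ≥ 0 and G ≥ 0. Suppose U⁰, …, U^N, μ¹, …, μ^N ∈ ℝ^{n_Ω} and θ¹, …, θ^N ∈ ℝ^{n_Γ} satisfy, for each n ∈ {1, …, N}: (i) M_Ω(Uⁿ − Uⁿ⁻¹) + τ·L_Ω·μⁿ − τ·L⁻¹·ext(M_Γ·(βθⁿ − μⁿ|_Γ)) = 0; (ii) M_Γ(Uⁿ|_Γ − Uⁿ⁻¹|_Γ) + τ·L_Γ·θⁿ + τ·β·L⁻¹·M_Γ·(βθⁿ − μⁿ|_Γ) = 0; (iii) M_Ω·μⁿ + ext(M_Γ·θⁿ) = L_Ω·Uⁿ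 + κ·ext(L_Γ·(Uⁿ|_Γ)) + M_Ω·(F₁′(Uⁿ) + F₂′(Uⁿ⁻¹)) + ext(M_Γ·(G₁′(Uⁿ|_Γ) + G₂′(Uⁿ⁻¹|_Γ))), with entrywise application of derivatives. Set E(U) := (1/2)·UᵀL_Ω U + (κ/2)·(U|_Γ)ᵀL_Γ(U|_Γ) + 𝟙ᵀM_Ω·F(U) + 𝟙ᵀM_Γ·G(U|_Γ). Then for every k ∈ {1, …, N}: E(U^k) + Σ_{n=1}^{k}[τ·(μⁿ)ᵀL_Ω μⁿ + τ·(θⁿ)ᵀL_Γ θⁿ + τ·L⁻¹·(βθⁿ − μⁿ|_Γ)ᵀM_Γ(βθⁿ − μⁿ|_Γ)] ≤ E(U⁰); in particular max_{k ≤ N} E(U^k) ≤ E(U⁰) and τ·Σ_{n=1}^{N}(βθⁿ − μⁿ|_Γ)ᵀM_Γ(βθⁿ − μⁿ|_Γ) ≤ L·E(U⁰). -/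

import Mathlib

/-!
Test the bulk equation of step `n` with `μⁿ`, the boundary equation with `θⁿ` and the chemical
potential equation with `Uⁿ - Uⁿ⁻¹`: the first two turn the mass-weighted increment into minus the
dissipation `Dⁿ`, the third into the discrete derivative of the energy. The implicit quadratic
terms only lose energy, since `(a - b)ᵀA a ≥ ½ aᵀA a - ½ bᵀA b` for `A ⪰ 0`, and for the
convex–concave splitting `F₁'(a) + F₂'(b)` the tangent-line inequalities give
`F(a) - F(b) ≤ (F₁'(a) + F₂'(b)) (a - b)`. Hence `E(Uⁿ) + Dⁿ ≤ E(Uⁿ⁻¹)`, which telescopes.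
Since `F, G ≥ 0` the energy is nonnegative, which bounds the `L⁻¹`-weighted part of `∑ Dⁿ`.
-/

open Matrix

/-- Restriction of a bulk vector (indexed by `Fin nΓ ⊕ Fin nI`, boundary
coordinates first) to its boundary coordinates. -/
def restrΓ {nΓ nI : ℕ} (v : Fin nΓ ⊕ Fin nI → ℝ) : Fin nΓ → ℝ := fun i => v (Sum.inl i)

/-- Extension of a boundary vector by zero in the interior coordinates. -/
def extΩ {nΓ nI : ℕ} (x : Fin nΓ → ℝ) : Fin nΓ ⊕ Fin nI → ℝ := Sum.elim x 0

/-- The discrete total free energy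
`E(U) = (1/2)·UᵀL_Ω U + (κ/2)·(U|_Γ)ᵀL_Γ(U|_Γ) + 𝟙ᵀM_Ω·F(U) + 𝟙ᵀM_Γ·G(U|_Γ)`. -/
noncomputable def discreteEnergy {nΓ nI : ℕ} (κ : ℝ)
    (MΩ LΩ : Matrix (Fin nΓ ⊕ Fin nI) (Fin nΓ ⊕ Fin nI) ℝ)
    (MΓ LΓ : Matrix (Fin nΓ) (Fin nΓ) ℝ)
    (F G : ℝ → ℝ) (U : Fin nΓ ⊕ Fin nI → ℝ) : ℝ :=
  (1 / 2) * (U ⬝ᵥ LΩ.mulVec U) + (κ / 2) * (restrΓ U ⬝ᵥ LΓ.mulVec (restrΓ U))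
    + (fun _ => (1 : ℝ)) ⬝ᵥ MΩ.mulVec (fun i => F (U i))
    + (fun _ => (1 : ℝ)) ⬝ᵥ MΓ.mulVec (fun i => G (restrΓ U i))

open Finset

lemma ConvexOn.sub_le_deriv_mul {f : ℝ → ℝ} (hf : ConvexOn ℝ Set.univ f) {a : ℝ}
    (ha : DifferentiableAt ℝ f a) (b : ℝ) : f a - f b ≤ deriv f a * (a - b) := by
  rcases lt_trichotomy a b with hab | rfl | hab
  · have h := hf.deriv_le_slope (Set.mem_univ a) (Set.mem_univ b) hab ha
    rw [slope_def_field, le_div_iff₀ (sub_pos.2 hab)] at h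
    linarith
  · simp
  · have h := hf.slope_le_deriv (Set.mem_univ b) (Set.mem_univ a) hab ha
    rw [slope_def_field, div_le_iff₀ (sub_pos.2 hab)] at h
    linarith

lemma ConcaveOn.sub_le_deriv_mul {f : ℝ → ℝ} (hf : ConcaveOn ℝ Set.univ f) {b : ℝ}
    (hb : DifferentiableAt ℝ f b) (a : ℝ) : f a - f b ≤ deriv f b * (a - b) := by
  have h := hf.neg.sub_le_deriv_mul hb.neg a
  rw [deriv.neg'] at h
  simp only [Pi.neg_apply] at h
  linarith

lemma convex_concave_split_sub_le {f g : ℝ → ℝ} (hf : ConvexOn ℝ Set.univ f)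
    (hg : ConcaveOn ℝ Set.univ g) (hfd : Differentiable ℝ f) (hgd : Differentiable ℝ g)
    (a b : ℝ) : (f a + g a) - (f b + g b) ≤ (deriv f a + deriv g b) * (a - b) := by
  linarith [hf.sub_le_deriv_mul (hfd a) b, hg.sub_le_deriv_mul (hgd b) a]

namespace Matrix

lemma PosSemidef.isSymm_of_real {ι : Type*} {A : Matrix ι ι ℝ} (hA : A.PosSemidef) : A.IsSymm :=
  isHermitian_iff_isSymm.1 hA.isHermitian

variable {ι : Type*} [Fintype ι]

lemma IsSymm.mulVec_dotProduct {A : Matrix ι ι ℝ} (hA : A.IsSymm) (x y : ι → ℝ) :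
    A *ᵥ x ⬝ᵥ y = x ⬝ᵥ A *ᵥ y := by
  rw [dotProduct_mulVec, ← mulVec_transpose, hA.eq, dotProduct_comm]

lemma PosSemidef.dotProduct_mulVec_self_nonneg {A : Matrix ι ι ℝ} (hA : A.PosSemidef)
    (x : ι → ℝ) : 0 ≤ x ⬝ᵥ A *ᵥ x := by
  simpa using hA.dotProduct_mulVec_nonneg x

lemma PosSemidef.half_quad_sub_half_quad_le {A : Matrix ι ι ℝ} (hA : A.PosSemidef)
    (a b : ι → ℝ) :
    1 / 2 * (a ⬝ᵥ A *ᵥ a) - 1 / 2 * (b ⬝ᵥ A *ᵥ b) ≤ (a - b) ⬝ᵥ A *ᵥ a := by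
  have hsymm := hA.isSymm_of_real.mulVec_dotProduct a b
  rw [dotProduct_comm] at hsymm
  have hsq := hA.dotProduct_mulVec_self_nonneg (a - b)
  simp only [mulVec_sub, sub_dotProduct, dotProduct_sub] at hsq ⊢
  linarith

variable [DecidableEq ι]

lemma one_dotProduct_diagonal_mulVec (d f : ι → ℝ) :
    (fun _ => (1 : ℝ)) ⬝ᵥ diagonal d *ᵥ f = ∑ i, d i * f i := by
  simp [dotProduct, mulVec_diagonal]

lemma dotProduct_diagonal_mulVec (d x f : ι → ℝ) :
    x ⬝ᵥ diagonal d *ᵥ f = ∑ i, d i * (f i * x i) := by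
  simp only [dotProduct, mulVec_diagonal]
  exact sum_congr rfl fun i _ => by ring

lemma one_dotProduct_diagonal_mulVec_split_sub_le {d : ι → ℝ} (hd : 0 ≤ d) {f g : ℝ → ℝ}
    (hf : ConvexOn ℝ Set.univ f) (hg : ConcaveOn ℝ Set.univ g) (hfd : Differentiable ℝ f)
    (hgd : Differentiable ℝ g) (a b : ι → ℝ) :
    (fun _ => (1 : ℝ)) ⬝ᵥ diagonal d *ᵥ (fun i => f (a i) + g (a i))
        - (fun _ => (1 : ℝ)) ⬝ᵥ diagonal d *ᵥ (fun i => f (b i) + g (b i))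
      ≤ (a - b) ⬝ᵥ diagonal d *ᵥ (fun i => deriv f (a i) + deriv g (b i)) := by
  rw [one_dotProduct_diagonal_mulVec, one_dotProduct_diagonal_mulVec, dotProduct_diagonal_mulVec,
    ← sum_sub_distrib]
  refine sum_le_sum fun i _ => ?_
  rw [← mul_sub]
  exact mul_le_mul_of_nonneg_left (convex_concave_split_sub_le hf hg hfd hgd _ _) (hd i)

lemma one_dotProduct_diagonal_mulVec_nonneg {d f : ι → ℝ} (hd : 0 ≤ d) (hf : 0 ≤ f) :
    0 ≤ (fun _ => (1 : ℝ)) ⬝ᵥ diagonal d *ᵥ f := by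
  rw [one_dotProduct_diagonal_mulVec]
  exact sum_nonneg fun i _ => mul_nonneg (hd i) (hf i)

end Matrix

lemma add_sum_Icc_le_of_add_le_pred {α : Type*} [AddCommGroup α] [PartialOrder α]
    [IsOrderedAddMonoid α] {e d : ℕ → α} {N : ℕ}
    (h : ∀ n, 1 ≤ n → n ≤ N → e n + d n ≤ e (n - 1)) :
    ∀ k ≤ N, e k + ∑ n ∈ Icc 1 k, d n ≤ e 0 := by
  intro k hk
  induction k with
  | zero => simp
  | succ k ih =>
    rw [sum_Icc_succ_top (Nat.le_add_left 1 k)]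
    calc e (k + 1) + (∑ n ∈ Icc 1 k, d n + d (k + 1))
        = e (k + 1) + d (k + 1) + ∑ n ∈ Icc 1 k, d n := by abel
      _ ≤ e k + ∑ n ∈ Icc 1 k, d n :=
          add_le_add_left (h (k + 1) (Nat.le_add_left 1 k) hk) _
      _ ≤ e 0 := ih (Nat.le_of_succ_le hk)

section DiscreteScheme

variable {nΓ nI : ℕ}

lemma extΩ_dotProduct (x : Fin nΓ → ℝ) (v : Fin nΓ ⊕ Fin nI → ℝ) :
    extΩ x ⬝ᵥ v = x ⬝ᵥ restrΓ v := by
  simp [dotProduct, extΩ, restrΓ, Fintype.sum_sum_type]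

lemma dotProduct_extΩ (v : Fin nΓ ⊕ Fin nI → ℝ) (x : Fin nΓ → ℝ) :
    v ⬝ᵥ extΩ x = restrΓ v ⬝ᵥ x := by
  rw [dotProduct_comm, extΩ_dotProduct, dotProduct_comm]

lemma restrΓ_sub (a b : Fin nΓ ⊕ Fin nI → ℝ) : restrΓ (a - b) = restrΓ a - restrΓ b := rfl

noncomputable def stepDissipation (β τ L : ℝ) (LΩ : Matrix (Fin nΓ ⊕ Fin nI) (Fin nΓ ⊕ Fin nI) ℝ)
    (MΓ LΓ : Matrix (Fin nΓ) (Fin nΓ) ℝ) (μ : Fin nΓ ⊕ Fin nI → ℝ) (θ : Fin nΓ → ℝ) : ℝ :=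
  τ * (μ ⬝ᵥ LΩ *ᵥ μ) + τ * (θ ⬝ᵥ LΓ *ᵥ θ)
    + τ * L⁻¹ * ((β • θ - restrΓ μ) ⬝ᵥ MΓ *ᵥ (β • θ - restrΓ μ))

variable {β κ τ L : ℝ} {MΩ LΩ : Matrix (Fin nΓ ⊕ Fin nI) (Fin nΓ ⊕ Fin nI) ℝ}
  {MΓ LΓ : Matrix (Fin nΓ) (Fin nΓ) ℝ}

lemma mul_inv_mul_le_stepDissipation (hτ : 0 ≤ τ) (hLΩ : LΩ.PosSemidef) (hLΓ : LΓ.PosSemidef)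
    (μ : Fin nΓ ⊕ Fin nI → ℝ) (θ : Fin nΓ → ℝ) :
    τ * L⁻¹ * ((β • θ - restrΓ μ) ⬝ᵥ MΓ *ᵥ (β • θ - restrΓ μ))
      ≤ stepDissipation β τ L LΩ MΓ LΓ μ θ := by
  have hμ := mul_nonneg hτ (hLΩ.dotProduct_mulVec_self_nonneg μ)
  have hθ := mul_nonneg hτ (hLΓ.dotProduct_mulVec_self_nonneg θ)
  unfold stepDissipation
  linarith

lemma stepDissipation_nonneg (hτ : 0 ≤ τ) (hL : 0 ≤ L) (hLΩ : LΩ.PosSemidef)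
    (hMΓ : MΓ.PosSemidef) (hLΓ : LΓ.PosSemidef) (μ : Fin nΓ ⊕ Fin nI → ℝ) (θ : Fin nΓ → ℝ) :
    0 ≤ stepDissipation β τ L LΩ MΓ LΓ μ θ :=
  (mul_nonneg (mul_nonneg hτ (inv_nonneg.2 hL)) (hMΓ.dotProduct_mulVec_self_nonneg _)).trans
    (mul_inv_mul_le_stepDissipation hτ hLΩ hLΓ μ θ)

lemma increment_dotProduct_mass_eq_neg_stepDissipation (hMΩ : MΩ.IsSymm) (hMΓ : MΓ.IsSymm)
    {U U' μ : Fin nΓ ⊕ Fin nI → ℝ} {θ : Fin nΓ → ℝ}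
    (hbulk : MΩ *ᵥ (U - U') + τ • LΩ *ᵥ μ
      - (τ * L⁻¹) • extΩ (MΓ *ᵥ (β • θ - restrΓ μ)) = 0)
    (hbdry : MΓ *ᵥ (restrΓ U - restrΓ U') + τ • LΓ *ᵥ θ
      + (τ * β * L⁻¹) • MΓ *ᵥ (β • θ - restrΓ μ) = 0) :
    (U - U') ⬝ᵥ MΩ *ᵥ μ + (restrΓ U - restrΓ U') ⬝ᵥ MΓ *ᵥ θ
      = -stepDissipation β τ L LΩ MΓ LΓ μ θ := by
  have hμ := congrArg (· ⬝ᵥ μ) hbulk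
  have hθ := congrArg (· ⬝ᵥ θ) hbdry
  simp only [add_dotProduct, sub_dotProduct, smul_dotProduct, zero_dotProduct, smul_eq_mul,
    extΩ_dotProduct, hMΩ.mulVec_dotProduct, hMΓ.mulVec_dotProduct] at hμ hθ
  rw [dotProduct_comm (LΩ *ᵥ μ)] at hμ
  rw [dotProduct_comm (LΓ *ᵥ θ)] at hθ
  unfold stepDissipation
  simp only [mulVec_sub, mulVec_smul, sub_dotProduct, dotProduct_sub, smul_dotProduct,
    dotProduct_smul, smul_eq_mul]
  linear_combination hμ + hθ


lemma dotProduct_mass_eq_of_potential {U μ f : Fin nΓ ⊕ Fin nI → ℝ} {θ g : Fin nΓ → ℝ}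
    (hpot : MΩ *ᵥ μ + extΩ (MΓ *ᵥ θ)
      = LΩ *ᵥ U + κ • extΩ (LΓ *ᵥ restrΓ U) + MΩ *ᵥ f + extΩ (MΓ *ᵥ g))
    (V : Fin nΓ ⊕ Fin nI → ℝ) :
    V ⬝ᵥ MΩ *ᵥ μ + restrΓ V ⬝ᵥ MΓ *ᵥ θ
      = V ⬝ᵥ LΩ *ᵥ U + κ * (restrΓ V ⬝ᵥ LΓ *ᵥ restrΓ U) + V ⬝ᵥ MΩ *ᵥ f
        + restrΓ V ⬝ᵥ MΓ *ᵥ g := by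
  simpa only [dotProduct_add, dotProduct_smul, dotProduct_extΩ, smul_eq_mul]
    using congrArg (V ⬝ᵥ ·) hpot

variable {dΩ : Fin nΓ ⊕ Fin nI → ℝ} {dΓ : Fin nΓ → ℝ}

lemma discreteEnergy_nonneg (hκ : 0 ≤ κ) (hLΩ : LΩ.PosSemidef) (hLΓ : LΓ.PosSemidef)
    (hdΩ : 0 ≤ dΩ) (hdΓ : 0 ≤ dΓ) {F G : ℝ → ℝ} (hF : ∀ s, 0 ≤ F s) (hG : ∀ s, 0 ≤ G s)
    (U : Fin nΓ ⊕ Fin nI → ℝ) :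
    0 ≤ discreteEnergy κ (diagonal dΩ) LΩ (diagonal dΓ) LΓ F G U := by
  have hbulk := hLΩ.dotProduct_mulVec_self_nonneg U
  have hbdry := mul_nonneg hκ (hLΓ.dotProduct_mulVec_self_nonneg (restrΓ U))
  have hF := one_dotProduct_diagonal_mulVec_nonneg hdΩ fun i => hF (U i)
  have hG := one_dotProduct_diagonal_mulVec_nonneg hdΓ fun i => hG (restrΓ U i)
  unfold discreteEnergy
  linarith

lemma discreteEnergy_sub_le (hκ : 0 ≤ κ) (hLΩ : LΩ.PosSemidef) (hLΓ : LΓ.PosSemidef)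
    (hdΩ : 0 ≤ dΩ) (hdΓ : 0 ≤ dΓ) {F₁ F₂ G₁ G₂ : ℝ → ℝ}
    (hF₁d : Differentiable ℝ F₁) (hF₂d : Differentiable ℝ F₂)
    (hG₁d : Differentiable ℝ G₁) (hG₂d : Differentiable ℝ G₂)
    (hF₁c : ConvexOn ℝ Set.univ F₁) (hG₁c : ConvexOn ℝ Set.univ G₁)
    (hF₂c : ConcaveOn ℝ Set.univ F₂) (hG₂c : ConcaveOn ℝ Set.univ G₂)
    (U U' : Fin nΓ ⊕ Fin nI → ℝ) :
    discreteEnergy κ (diagonal dΩ) LΩ (diagonal dΓ) LΓ (fun s => F₁ s + F₂ s)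
        (fun s => G₁ s + G₂ s) U
      - discreteEnergy κ (diagonal dΩ) LΩ (diagonal dΓ) LΓ (fun s => F₁ s + F₂ s)
        (fun s => G₁ s + G₂ s) U'
      ≤ (U - U') ⬝ᵥ LΩ *ᵥ U + κ * ((restrΓ U - restrΓ U') ⬝ᵥ LΓ *ᵥ restrΓ U)
        + (U - U') ⬝ᵥ diagonal dΩ *ᵥ (fun i => deriv F₁ (U i) + deriv F₂ (U' i))
        + (restrΓ U - restrΓ U') ⬝ᵥ diagonal dΓ *ᵥ
            (fun i => deriv G₁ (restrΓ U i) + deriv G₂ (restrΓ U' i)) := by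
  have hbulk := hLΩ.half_quad_sub_half_quad_le U U'
  have hbdry := mul_le_mul_of_nonneg_left
    (hLΓ.half_quad_sub_half_quad_le (restrΓ U) (restrΓ U')) hκ
  have hF := one_dotProduct_diagonal_mulVec_split_sub_le hdΩ hF₁c hF₂c hF₁d hF₂d U U'
  have hG := one_dotProduct_diagonal_mulVec_split_sub_le hdΓ hG₁c hG₂c hG₁d hG₂d
    (restrΓ U) (restrΓ U')
  unfold discreteEnergy
  linarith

lemma discreteEnergy_add_stepDissipation_le (hκ : 0 ≤ κ)
    (hdΩ : 0 ≤ dΩ) (hdΓ : 0 ≤ dΓ) (hLΩ : LΩ.PosSemidef) (hLΓ : LΓ.PosSemidef)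
    {F₁ F₂ G₁ G₂ : ℝ → ℝ}
    (hF₁d : Differentiable ℝ F₁) (hF₂d : Differentiable ℝ F₂)
    (hG₁d : Differentiable ℝ G₁) (hG₂d : Differentiable ℝ G₂)
    (hF₁c : ConvexOn ℝ Set.univ F₁) (hG₁c : ConvexOn ℝ Set.univ G₁)
    (hF₂c : ConcaveOn ℝ Set.univ F₂) (hG₂c : ConcaveOn ℝ Set.univ G₂)
    {U U' μ : Fin nΓ ⊕ Fin nI → ℝ} {θ : Fin nΓ → ℝ}
    (hbulk : diagonal dΩ *ᵥ (U - U') + τ • LΩ *ᵥ μ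
      - (τ * L⁻¹) • extΩ (diagonal dΓ *ᵥ (β • θ - restrΓ μ)) = 0)
    (hbdry : diagonal dΓ *ᵥ (restrΓ U - restrΓ U') + τ • LΓ *ᵥ θ
      + (τ * β * L⁻¹) • diagonal dΓ *ᵥ (β • θ - restrΓ μ) = 0)
    (hpot : diagonal dΩ *ᵥ μ + extΩ (diagonal dΓ *ᵥ θ)
      = LΩ *ᵥ U + κ • extΩ (LΓ *ᵥ restrΓ U)
        + diagonal dΩ *ᵥ (fun i => deriv F₁ (U i) + deriv F₂ (U' i))
        + extΩ (diagonal dΓ *ᵥ (fun i => deriv G₁ (restrΓ U i) + deriv G₂ (restrΓ U' i)))) :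
    discreteEnergy κ (diagonal dΩ) LΩ (diagonal dΓ) LΓ (fun s => F₁ s + F₂ s)
        (fun s => G₁ s + G₂ s) U + stepDissipation β τ L LΩ (diagonal dΓ) LΓ μ θ
      ≤ discreteEnergy κ (diagonal dΩ) LΩ (diagonal dΓ) LΓ (fun s => F₁ s + F₂ s)
        (fun s => G₁ s + G₂ s) U' := by
  have hdiss := increment_dotProduct_mass_eq_neg_stepDissipation (isSymm_diagonal dΩ)
    (isSymm_diagonal dΓ) hbulk hbdry
  have htest := dotProduct_mass_eq_of_potential hpot (U - U')
  rw [restrΓ_sub] at htest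
  have henergy := discreteEnergy_sub_le hκ hLΩ hLΓ hdΩ hdΓ hF₁d hF₂d hG₁d hG₂d hF₁c hG₁c hF₂c
    hG₂c U U'
  linarith

end DiscreteScheme

theorem discrete_energy_global_general (nΓ nI : ℕ) (N : ℕ)
    (β κ τ L : ℝ) (hκ : 0 ≤ κ) (hτ : 0 < τ) (hL : 0 < L)
    (MΩ : Matrix (Fin nΓ ⊕ Fin nI) (Fin nΓ ⊕ Fin nI) ℝ)
    (dΩ : Fin nΓ ⊕ Fin nI → ℝ) (hdΩ : ∀ i, 0 < dΩ i) (hMΩ : MΩ = Matrix.diagonal dΩ)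
    (MΓ : Matrix (Fin nΓ) (Fin nΓ) ℝ)
    (dΓ : Fin nΓ → ℝ) (hdΓ : ∀ i, 0 < dΓ i) (hMΓ : MΓ = Matrix.diagonal dΓ)
    (LΩ : Matrix (Fin nΓ ⊕ Fin nI) (Fin nΓ ⊕ Fin nI) ℝ) (hLΩ : LΩ.PosSemidef)
    (LΓ : Matrix (Fin nΓ) (Fin nΓ) ℝ) (hLΓ : LΓ.PosSemidef)
    (F₁ F₂ G₁ G₂ : ℝ → ℝ)
    (hF₁d : Differentiable ℝ F₁) (hF₂d : Differentiable ℝ F₂)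
    (hG₁d : Differentiable ℝ G₁) (hG₂d : Differentiable ℝ G₂)
    (hF₁c : ConvexOn ℝ Set.univ F₁) (hG₁c : ConvexOn ℝ Set.univ G₁)
    (hF₂c : ConcaveOn ℝ Set.univ F₂) (hG₂c : ConcaveOn ℝ Set.univ G₂)
    (hFpos : ∀ s : ℝ, 0 ≤ F₁ s + F₂ s) (hGpos : ∀ s : ℝ, 0 ≤ G₁ s + G₂ s)
    (U μ : ℕ → (Fin nΓ ⊕ Fin nI → ℝ)) (θ : ℕ → (Fin nΓ → ℝ))
    -- (i) bulk evolution equation, for n = 1, …, N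
    (hbulk : ∀ n, 1 ≤ n → n ≤ N →
      MΩ.mulVec (U n - U (n - 1)) + τ • LΩ.mulVec (μ n)
        - (τ * L⁻¹) • extΩ (MΓ.mulVec (β • θ n - restrΓ (μ n))) = 0)
    -- (ii) boundary evolution equation, for n = 1, …, N
    (hbdry : ∀ n, 1 ≤ n → n ≤ N →
      MΓ.mulVec (restrΓ (U n) - restrΓ (U (n - 1))) + τ • LΓ.mulVec (θ n)
        + (τ * β * L⁻¹) • MΓ.mulVec (β • θ n - restrΓ (μ n)) = 0)
    -- (iii) discrete chemical potential equation, for n = 1, …, N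
    (hpot : ∀ n, 1 ≤ n → n ≤ N →
      MΩ.mulVec (μ n) + extΩ (MΓ.mulVec (θ n))
        = LΩ.mulVec (U n) + κ • extΩ (LΓ.mulVec (restrΓ (U n)))
          + MΩ.mulVec (fun i => deriv F₁ (U n i) + deriv F₂ (U (n - 1) i))
          + extΩ (MΓ.mulVec (fun i =>
              deriv G₁ (restrΓ (U n) i) + deriv G₂ (restrΓ (U (n - 1)) i)))) :
    (∀ k, 1 ≤ k → k ≤ N →
      discreteEnergy κ MΩ LΩ MΓ LΓ (fun s => F₁ s + F₂ s) (fun s => G₁ s + G₂ s) (U k)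
        + ∑ n ∈ Finset.Icc 1 k,
            (τ * (μ n ⬝ᵥ LΩ.mulVec (μ n)) + τ * (θ n ⬝ᵥ LΓ.mulVec (θ n))
              + τ * L⁻¹ * ((β • θ n - restrΓ (μ n)) ⬝ᵥ MΓ.mulVec (β • θ n - restrΓ (μ n))))
      ≤ discreteEnergy κ MΩ LΩ MΓ LΓ (fun s => F₁ s + F₂ s) (fun s => G₁ s + G₂ s) (U 0)) ∧
    (∀ k, k ≤ N →
      discreteEnergy κ MΩ LΩ MΓ LΓ (fun s => F₁ s + F₂ s) (fun s => G₁ s + G₂ s) (U k)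
        ≤ discreteEnergy κ MΩ LΩ MΓ LΓ (fun s => F₁ s + F₂ s) (fun s => G₁ s + G₂ s) (U 0)) ∧
    τ * ∑ n ∈ Finset.Icc 1 N,
        (β • θ n - restrΓ (μ n)) ⬝ᵥ MΓ.mulVec (β • θ n - restrΓ (μ n))
      ≤ L * discreteEnergy κ MΩ LΩ MΓ LΓ (fun s => F₁ s + F₂ s) (fun s => G₁ s + G₂ s) (U 0) := by
  subst hMΩ hMΓ
  set E := discreteEnergy κ (diagonal dΩ) LΩ (diagonal dΓ) LΓ (fun s => F₁ s + F₂ s)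
    (fun s => G₁ s + G₂ s)
  set D := fun n => stepDissipation β τ L LΩ (diagonal dΓ) LΓ (μ n) (θ n)
  have hdΩ : 0 ≤ dΩ := fun i => (hdΩ i).le
  have hdΓ : 0 ≤ dΓ := fun i => (hdΓ i).le
  have hdecay : ∀ k ≤ N, E (U k) + ∑ n ∈ Icc 1 k, D n ≤ E (U 0) :=
    add_sum_Icc_le_of_add_le_pred fun n h1 h2 =>
      discreteEnergy_add_stepDissipation_le hκ hdΩ hdΓ hLΩ hLΓ hF₁d hF₂d hG₁d hG₂d hF₁c hG₁c
        hF₂c hG₂c (hbulk n h1 h2) (hbdry n h1 h2) (hpot n h1 h2)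
  have hD : ∀ n, 0 ≤ D n := fun n =>
    stepDissipation_nonneg hτ.le hL.le hLΩ (PosSemidef.diagonal hdΓ) hLΓ (μ n) (θ n)
  have hE : ∀ V, 0 ≤ E V := discreteEnergy_nonneg hκ hLΩ hLΓ hdΩ hdΓ hFpos hGpos
  refine ⟨fun k _ hk => hdecay k hk, fun k hk => ?_, ?_⟩
  · exact (le_add_of_nonneg_right (sum_nonneg fun n _ => hD n)).trans (hdecay k hk)
  · rw [← div_le_iff₀' hL, mul_div_right_comm, div_eq_mul_inv, mul_sum]
    linarith [sum_le_sum fun n (_ : n ∈ Icc 1 N) =>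
      mul_inv_mul_le_stepDissipation (β := β) (L := L) (MΓ := diagonal dΓ) hτ.le hLΩ hLΓ
        (μ n) (θ n), hdecay N le_rfl, hE (U N)]

/-- Lemma 5.5 of the paper, matrix formulation: the global
discrete energy–dissipation estimate obtained by summing the per-step energy
inequality, including the `L`-dependent bound on the chemical potential
difference `βθ − μ|_Γ`. -/
theorem discrete_energy_global (nΓ nI : ℕ) (hnΓ : 1 ≤ nΓ) (N : ℕ) (hN : 1 ≤ N)
    (β κ τ L : ℝ) (hβ : 0 < β) (hκ : 0 ≤ κ) (hτ : 0 < τ) (hL : 0 < L)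
    (MΩ : Matrix (Fin nΓ ⊕ Fin nI) (Fin nΓ ⊕ Fin nI) ℝ)
    (dΩ : Fin nΓ ⊕ Fin nI → ℝ) (hdΩ : ∀ i, 0 < dΩ i) (hMΩ : MΩ = Matrix.diagonal dΩ)
    (MΓ : Matrix (Fin nΓ) (Fin nΓ) ℝ)
    (dΓ : Fin nΓ → ℝ) (hdΓ : ∀ i, 0 < dΓ i) (hMΓ : MΓ = Matrix.diagonal dΓ)
    (LΩ : Matrix (Fin nΓ ⊕ Fin nI) (Fin nΓ ⊕ Fin nI) ℝ) (hLΩ : LΩ.PosSemidef)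
    (LΓ : Matrix (Fin nΓ) (Fin nΓ) ℝ) (hLΓ : LΓ.PosSemidef)
    (F₁ F₂ G₁ G₂ : ℝ → ℝ)
    (hF₁d : Differentiable ℝ F₁) (hF₂d : Differentiable ℝ F₂)
    (hG₁d : Differentiable ℝ G₁) (hG₂d : Differentiable ℝ G₂)
    (hF₁c : ConvexOn ℝ Set.univ F₁) (hG₁c : ConvexOn ℝ Set.univ G₁)
    (hF₂c : ConcaveOn ℝ Set.univ F₂) (hG₂c : ConcaveOn ℝ Set.univ G₂)
    (hFpos : ∀ s : ℝ, 0 ≤ F₁ s + F₂ s) (hGpos : ∀ s : ℝ, 0 ≤ G₁ s + G₂ s)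
    (U μ : ℕ → (Fin nΓ ⊕ Fin nI → ℝ)) (θ : ℕ → (Fin nΓ → ℝ))
    -- (i) bulk evolution equation, for n = 1, …, N
    (hbulk : ∀ n, 1 ≤ n → n ≤ N →
      MΩ.mulVec (U n - U (n - 1)) + τ • LΩ.mulVec (μ n)
        - (τ * L⁻¹) • extΩ (MΓ.mulVec (β • θ n - restrΓ (μ n))) = 0)
    -- (ii) boundary evolution equation, for n = 1, …, N
    (hbdry : ∀ n, 1 ≤ n → n ≤ N →
      MΓ.mulVec (restrΓ (U n) - restrΓ (U (n - 1))) + τ • LΓ.mulVec (θ n)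
        + (τ * β * L⁻¹) • MΓ.mulVec (β • θ n - restrΓ (μ n)) = 0)
    -- (iii) discrete chemical potential equation, for n = 1, …, N
    (hpot : ∀ n, 1 ≤ n → n ≤ N →
      MΩ.mulVec (μ n) + extΩ (MΓ.mulVec (θ n))
        = LΩ.mulVec (U n) + κ • extΩ (LΓ.mulVec (restrΓ (U n)))
          + MΩ.mulVec (fun i => deriv F₁ (U n i) + deriv F₂ (U (n - 1) i))
          + extΩ (MΓ.mulVec (fun i =>
              deriv G₁ (restrΓ (U n) i) + deriv G₂ (restrΓ (U (n - 1)) i)))) :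
    (∀ k, 1 ≤ k → k ≤ N →
      discreteEnergy κ MΩ LΩ MΓ LΓ (fun s => F₁ s + F₂ s) (fun s => G₁ s + G₂ s) (U k)
        + ∑ n ∈ Finset.Icc 1 k,
            (τ * (μ n ⬝ᵥ LΩ.mulVec (μ n)) + τ * (θ n ⬝ᵥ LΓ.mulVec (θ n))
              + τ * L⁻¹ * ((β • θ n - restrΓ (μ n)) ⬝ᵥ MΓ.mulVec (β • θ n - restrΓ (μ n))))
      ≤ discreteEnergy κ MΩ LΩ MΓ LΓ (fun s => F₁ s + F₂ s) (fun s => G₁ s + G₂ s) (U 0)) ∧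
    (∀ k, k ≤ N →
      discreteEnergy κ MΩ LΩ MΓ LΓ (fun s => F₁ s + F₂ s) (fun s => G₁ s + G₂ s) (U k)
        ≤ discreteEnergy κ MΩ LΩ MΓ LΓ (fun s => F₁ s + F₂ s) (fun s => G₁ s + G₂ s) (U 0)) ∧
    τ * ∑ n ∈ Finset.Icc 1 N,
        (β • θ n - restrΓ (μ n)) ⬝ᵥ MΓ.mulVec (β • θ n - restrΓ (μ n))
      ≤ L * discreteEnergy κ MΩ LΩ MΓ LΓ (fun s => F₁ s + F₂ s) (fun s => G₁ s + G₂ s) (U 0) :=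
  discrete_energy_global_general nΓ nI N β κ τ L hκ hτ hL MΩ dΩ hdΩ hMΩ MΓ dΓ hdΓ hMΓ LΩ hLΩ LΓ hLΓ
    F₁ F₂ G₁ G₂ hF₁d hF₂d hG₁d hG₂d hF₁c hG₁c hF₂c hG₂c hFpos hGpos U μ θ hbulk hbdry hpot
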